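/- (Strong Fano bound.) Let q ≥ 2 and let p be a joint pmf of (x, y) on Fin m × Fin q. Let Acc = ∑ over j with p_X(j) > 0 of p_X(j) * (max i, p(i | j)), and let H(y | x) = ∑ over j with p_X(j) > 0 of p_X(j) * H(p(· | j)) be the conditional entropy. Then Acc ∈ [1/q, 1] and h̄_q(Acc) ≥ H(y | x); equivalently, since h̄_q is decreasing, Acc ≤ h̄_q⁻¹(H(y | x)) = h̄_q⁻¹(H(p_Y) - I(y; x)). (Interpretation: the highest accuracy achievable by any classifier using x to predict y is at most h̄_q⁻¹(h(y) - I(y; x)).) -/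

import Mathlib

/-!
Write `a_j = max_i p(i | j)`. For a single probability vector `r` with largest entry `a`,
concavity of `x ↦ -x log x` says that the entropy is largest when the remaining mass `1 - a`
is spread evenly over the other `q - 1` outcomes, which gives exactly `H(r) ≤ h̄_q(a)`.
Since `h̄_q(a) = H_q(1 - a)` for the `q`-ary entropy function `H_q`, `h̄_q` is concave on
`[0, 1]`, so averaging over `x` with Jensen's inequality gives
`H(y | x) ≤ ∑_j p_X(j) h̄_q(a_j) ≤ h̄_q(Acc)`. The bound on `h̄_q⁻¹` follows because `h̄_q` is a
continuous decreasing function on `[1/q, 1]`.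
-/

/-- `h̄_q(a) = -a log a - (1-a) log((1-a)/(q-1))`, natural log, with the
convention `0 · log 0 = 0` (Mathlib's `Real.log 0 = 0` realizes it). -/
noncomputable def hbar (q : ℕ) (a : ℝ) : ℝ :=
  -a * Real.log a - (1 - a) * Real.log ((1 - a) / ((q : ℝ) - 1))

/-- `h̄_q⁻¹ : [0, log q] → [1/q, 1]`, the inverse of the strictly decreasing
bijection `h̄_q : [1/q, 1] → [0, log q]`. -/
noncomputable def hbarInv (q : ℕ) (h : ℝ) : ℝ :=
  Function.invFunOn (hbar q) (Set.Icc (1 / (q : ℝ)) 1) h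

/-- Shannon entropy of a probability vector, in nats, convention `0 log 0 = 0`. -/
noncomputable def entropy {q : ℕ} (r : Fin q → ℝ) : ℝ :=
  -∑ i, r i * Real.log (r i)

open Real Finset

lemma Real.sum_negMulLog_le_card_mul {ι : Type*} (t : Finset ι) {x : ι → ℝ}
    (hx : ∀ i ∈ t, 0 ≤ x i) :
    ∑ i ∈ t, negMulLog (x i) ≤ #t * negMulLog ((∑ i ∈ t, x i) / #t) := by
  rcases t.eq_empty_or_nonempty with rfl | ht
  · simp
  have hn : (#t : ℝ) ≠ 0 := by exact_mod_cast ht.card_pos.ne'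
  have hjensen := concaveOn_negMulLog.le_map_sum (t := t) (w := fun _ => (#t : ℝ)⁻¹)
    (fun _ _ => by positivity) (by simp [hn]) hx
  simp only [smul_eq_mul, inv_mul_eq_div, ← sum_div] at hjensen
  calc ∑ i ∈ t, negMulLog (x i) = #t * ((∑ i ∈ t, negMulLog (x i)) / #t) := by field_simp
    _ ≤ #t * negMulLog ((∑ i ∈ t, x i) / #t) := by gcongr

lemma entropy_eq_sum_negMulLog {q : ℕ} (r : Fin q → ℝ) :
    entropy r = ∑ i, negMulLog (r i) := by
  simp [entropy, negMulLog, sum_neg_distrib]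

lemma le_one_of_mem_stdSimplex {ι : Type*} [Fintype ι] {r : ι → ℝ}
    (hr : r ∈ stdSimplex ℝ ι) (i : ι) : r i ≤ 1 :=
  hr.2 ▸ single_le_sum (fun j _ => hr.1 j) (mem_univ i)

lemma entropy_nonneg {q : ℕ} {r : Fin q → ℝ} (hr : r ∈ stdSimplex ℝ (Fin q)) :
    0 ≤ entropy r := by
  rw [entropy_eq_sum_negMulLog]
  exact sum_nonneg fun i _ => negMulLog_nonneg (hr.1 i) (le_one_of_mem_stdSimplex hr i)

lemma hbar_eq_negMulLog_add (q : ℕ) (a : ℝ) :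
    hbar q a = negMulLog a + ((q : ℝ) - 1) * negMulLog ((1 - a) / ((q : ℝ) - 1)) := by
  rcases eq_or_ne ((q : ℝ) - 1) 0 with hq | hq
  · simp [hbar, hq, negMulLog]
  · simp only [hbar, negMulLog]
    field_simp
    ring

lemma hbar_eq_qaryEntropy {q : ℕ} (hq : 2 ≤ q) (a : ℝ) :
    hbar q a = qaryEntropy q (1 - a) := by
  have hq1 : (q : ℝ) - 1 ≠ 0 := by
    have : (2 : ℝ) ≤ q := by exact_mod_cast hq
    linarith
  rcases eq_or_ne a 1 with rfl | ha
  · simp [hbar]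
  · have h1a : (1 : ℝ) - a ≠ 0 := sub_ne_zero.mpr ha.symm
    rw [hbar, qaryEntropy, binEntropy, Real.log_div h1a hq1, Real.log_inv, sub_sub_cancel,
      Real.log_inv]
    push_cast
    ring

lemma entropy_le_hbar {q : ℕ} {r : Fin q → ℝ} (hr : r ∈ stdSimplex ℝ (Fin q)) (i₀ : Fin q) :
    entropy r ≤ hbar q (r i₀) := by
  set t := univ.erase i₀
  have hcard : (#t : ℝ) = q - 1 := by
    rw [card_erase_of_mem (mem_univ i₀), card_univ, Fintype.card_fin,
      Nat.cast_sub (Nat.one_le_iff_ne_zero.mpr i₀.pos.ne'), Nat.cast_one]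
  have hrest : ∑ i ∈ t, r i = 1 - r i₀ := by
    rw [← hr.2, ← add_sum_erase univ r (mem_univ i₀), add_sub_cancel_left]
  calc entropy r = negMulLog (r i₀) + ∑ i ∈ t, negMulLog (r i) := by
        rw [entropy_eq_sum_negMulLog]
        exact (add_sum_erase univ _ (mem_univ i₀)).symm
    _ ≤ negMulLog (r i₀) + #t * negMulLog ((∑ i ∈ t, r i) / #t) := by
        gcongr
        exact sum_negMulLog_le_card_mul t fun i _ => hr.1 i
    _ = hbar q (r i₀) := by rw [hrest, hcard, hbar_eq_negMulLog_add]

lemma sup'_mem_Icc_of_mem_stdSimplex {q : ℕ} {r : Fin q → ℝ} (hr : r ∈ stdSimplex ℝ (Fin q))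
    (hne : (univ : Finset (Fin q)).Nonempty) :
    univ.sup' hne r ∈ Set.Icc (1 / (q : ℝ)) 1 := by
  have hq : (0 : ℝ) < q := by exact_mod_cast hne.choose.pos
  refine ⟨?_, sup'_le hne r fun i _ => le_one_of_mem_stdSimplex hr i⟩
  rw [div_le_iff₀' hq]
  calc (1 : ℝ) = ∑ i, r i := hr.2.symm
    _ ≤ ∑ _i : Fin q, univ.sup' hne r := sum_le_sum fun i _ => le_sup' r (mem_univ i)
    _ = q * univ.sup' hne r := by simp

lemma continuous_hbar {q : ℕ} (hq : 2 ≤ q) : Continuous (hbar q) := by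
  rw [funext (hbar_eq_qaryEntropy hq)]
  fun_prop

lemma strictAntiOn_hbar {q : ℕ} (hq : 2 ≤ q) :
    StrictAntiOn (hbar q) (Set.Icc (1 / (q : ℝ)) 1) := by
  intro x hx y hy hxy
  rw [hbar_eq_qaryEntropy hq, hbar_eq_qaryEntropy hq]
  exact qaryEntropy_strictMonoOn hq ⟨by linarith [hy.2], by linarith [hy.1]⟩
    ⟨by linarith [hx.2], by linarith [hx.1]⟩ (by linarith)

lemma concaveOn_hbar {q : ℕ} (hq : 2 ≤ q) : ConcaveOn ℝ (Set.Icc 0 1) (hbar q) := by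
  have h := (strictConcaveOn_qaryEntropy (q := q)).concaveOn.comp_affineMap
    (AffineMap.const ℝ ℝ (1 : ℝ) - AffineMap.id ℝ ℝ)
  have hpre : ⇑(AffineMap.const ℝ ℝ (1 : ℝ) - AffineMap.id ℝ ℝ) ⁻¹' Set.Icc 0 1 =
      Set.Icc 0 1 := by
    ext a; simp [and_comm]
  rw [hpre] at h
  exact h.congr fun a _ => (hbar_eq_qaryEntropy hq a).symm

lemma le_hbarInv_of_le_hbar {q : ℕ} (hq : 2 ≤ q) {a h : ℝ} (ha : a ∈ Set.Icc (1 / (q : ℝ)) 1)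
    (h0 : 0 ≤ h) (hh : h ≤ hbar q a) : a ≤ hbarInv q h := by
  have hle : 1 / (q : ℝ) ≤ 1 := ha.1.trans ha.2
  have himage : h ∈ hbar q '' Set.Icc (1 / (q : ℝ)) 1 :=
    intermediate_value_Icc' hle (continuous_hbar hq).continuousOn
      ⟨by simpa [hbar] using h0,
        hh.trans ((strictAntiOn_hbar hq).antitoneOn ⟨le_rfl, hle⟩ ha ha.1)⟩
  obtain ⟨hmem, hinv⟩ := Function.invFunOn_pos himage
  exact ((strictAntiOn_hbar hq).le_iff_ge hmem ha).mp (hinv.le.trans hh)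

section Mixture

variable {ι : Type*} {q : ℕ} {t : Finset ι} {w : ι → ℝ} {r : ι → Fin q → ℝ}

lemma sum_mul_sup'_mem_Icc (hw₀ : ∀ j ∈ t, 0 ≤ w j) (hw₁ : ∑ j ∈ t, w j = 1)
    (hr : ∀ j ∈ t, r j ∈ stdSimplex ℝ (Fin q)) (hne : (univ : Finset (Fin q)).Nonempty) :
    ∑ j ∈ t, w j * univ.sup' hne (r j) ∈ Set.Icc (1 / (q : ℝ)) 1 :=
  (convex_Icc _ _).sum_mem hw₀ hw₁ fun j hj => sup'_mem_Icc_of_mem_stdSimplex (hr j hj) hne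

lemma sum_mul_entropy_le_hbar (hq : 2 ≤ q) (hw₀ : ∀ j ∈ t, 0 ≤ w j)
    (hw₁ : ∑ j ∈ t, w j = 1) (hr : ∀ j ∈ t, r j ∈ stdSimplex ℝ (Fin q))
    (hne : (univ : Finset (Fin q)).Nonempty) :
    ∑ j ∈ t, w j * entropy (r j) ≤ hbar q (∑ j ∈ t, w j * univ.sup' hne (r j)) := by
  have hmem (j) (hj : j ∈ t) : univ.sup' hne (r j) ∈ Set.Icc (0 : ℝ) 1 :=
    Set.Icc_subset_Icc_left (by positivity) (sup'_mem_Icc_of_mem_stdSimplex (hr j hj) hne)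
  calc ∑ j ∈ t, w j * entropy (r j) ≤ ∑ j ∈ t, w j * hbar q (univ.sup' hne (r j)) := by
        gcongr with j hj
        · exact hw₀ j hj
        · obtain ⟨i₀, -, hi₀⟩ := exists_mem_eq_sup' hne (r j)
          rw [hi₀]
          exact entropy_le_hbar (hr j hj) i₀
    _ ≤ hbar q (∑ j ∈ t, w j * univ.sup' hne (r j)) :=
        (concaveOn_hbar hq).le_map_sum hw₀ hw₁ hmem

end Mixture

/-- Strong Fano bound: for a joint pmf `p` of `(x, y)` on
`Fin m × Fin q` (`q ≥ 2`, `p (j, i)` with `j` the value of `x`), writing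
`Acc = ∑_{j : p_X(j) > 0} p_X(j) max_i p(i|j)` and
`H(y|x) = ∑_{j : p_X(j) > 0} p_X(j) H(p(·|j))`, we have `Acc ∈ [1/q, 1]` and
`h̄_q(Acc) ≥ H(y|x)`; equivalently `Acc ≤ h̄_q⁻¹(H(p_Y) - I(y; x))`. -/
theorem stmt_11 (m q : ℕ) (hq : 2 ≤ q) (p : Fin m × Fin q → ℝ)
    (hp0 : ∀ t, 0 ≤ p t) (hp1 : ∑ t, p t = 1)
    (pX : Fin m → ℝ) (hpX : ∀ j, pX j = ∑ i, p (j, i))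
    (pY : Fin q → ℝ)
    (cond : Fin m → Fin q → ℝ) (hcond : ∀ j i, cond j i = p (j, i) / pX j)
    (Acc : ℝ) (hAcc : Acc = ∑ j ∈ Finset.univ.filter (fun j : Fin m => 0 < pX j),
      pX j * Finset.univ.sup' ⟨⟨0, by omega⟩, Finset.mem_univ _⟩ (cond j))
    (Hyx : ℝ) (hHyx : Hyx = ∑ j ∈ Finset.univ.filter (fun j : Fin m => 0 < pX j),
      pX j * entropy (cond j))
    (I : ℝ) (hI : I = entropy pY - Hyx) :
    Acc ∈ Set.Icc (1 / (q : ℝ)) 1 ∧ Hyx ≤ hbar q Acc ∧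
      Acc ≤ hbarInv q (entropy pY - I) := by
  have hpX0 (j) : 0 ≤ pX j := hpX j ▸ sum_nonneg fun i _ => hp0 _
  have hpX1 : ∑ j ∈ univ.filter (fun j => 0 < pX j), pX j = 1 := by
    rw [sum_filter_of_ne fun j _ h => (hpX0 j).lt_of_ne' h, ← hp1, Fintype.sum_prod_type]
    simp_rw [hpX]
  have hcond_mem (j) (hj : j ∈ univ.filter (fun j => 0 < pX j)) :
      cond j ∈ stdSimplex ℝ (Fin q) := by
    have hj : 0 < pX j := (mem_filter.mp hj).2
    refine ⟨fun i => hcond j i ▸ div_nonneg (hp0 _) hj.le, ?_⟩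
    simp_rw [hcond, ← sum_div, ← hpX, div_self hj.ne']
  have hAcc_mem : Acc ∈ Set.Icc (1 / (q : ℝ)) 1 :=
    hAcc ▸ sum_mul_sup'_mem_Icc (fun j _ => hpX0 j) hpX1 hcond_mem _
  have hfano : Hyx ≤ hbar q Acc :=
    hHyx ▸ hAcc ▸ sum_mul_entropy_le_hbar hq (fun j _ => hpX0 j) hpX1 hcond_mem _
  have hHyx0 : 0 ≤ Hyx :=
    hHyx ▸ sum_nonneg fun j hj => mul_nonneg (hpX0 j) (entropy_nonneg (hcond_mem j hj))
  refine ⟨hAcc_mem, hfano, ?_⟩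
  rw [hI, sub_sub_cancel]
  exact le_hbarInv_of_le_hbar hq hAcc_mem hHyx0 hfano
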